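/- arXiv:1811.01576 — 3 statements merged into one kernel-verified Lean document; each statement's English description precedes it below -/
import Mathlib

section
/- For all natural numbers $d \ge 1$ and $m \ge 1$, the volume of the unit ball $B_{2m}^d = \{x \in \mathbb{R}^d : \sum_{j=1}^d |x_j|^{2m} \le 1\}$ satisfies $2^d (e(d + 2m))^{-d/(2m)} \le \mathrm{vol}\,B_{2m}^d \le 2^d (2em/d)^{d/(2m)}$. -/
/-! The cube `[-d^{-1/p}, d^{-1/p}]^d` lies in the unit `ℓ_p` ball, which gives the lower bound
`2^d d^{-d/p}`. For the upper bound, the exact volume `(2Γ(1 + 1/p))^d / Γ(1 + d/p)` is estimated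
with `Γ(1 + 1/p) ≤ 1`, by convexity of `Γ` on `[1, 2]`, and `Γ(1 + s) ≥ (s/e)^s`, obtained by
restricting Euler's integral to `[s, ∞)`. -/

open MeasureTheory Set Fintype

namespace Real

theorem Gamma_le_one_of_mem_Icc {x : ℝ} (hx : x ∈ Icc 1 2) : Gamma x ≤ 1 := by
  have h := convexOn_Gamma.le_on_segment (mem_Ioi.2 one_pos) (mem_Ioi.2 two_pos)
    (by rwa [segment_eq_Icc one_le_two])
  simpa [Gamma_two] using h

theorem div_exp_one_rpow_le_Gamma_add_one {s : ℝ} (hs : 0 ≤ s) :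
    (s / exp 1) ^ s ≤ Gamma (s + 1) := by
  have hΓ : IntegrableOn (fun x ↦ exp (-x) * x ^ s) (Ioi 0) := by
    simpa using GammaIntegral_convergent (s := s + 1) (by linarith)
  calc (s / exp 1) ^ s = ∫ x in Ioi s, exp (-x) * s ^ s := by
        rw [integral_mul_const, integral_exp_neg_Ioi, div_rpow hs (exp_pos 1).le, exp_one_rpow,
          exp_neg, div_eq_mul_inv, mul_comm]
    _ ≤ ∫ x in Ioi s, exp (-x) * x ^ s :=
        setIntegral_mono_on ((integrableOn_exp_neg_Ioi s).mul_const _)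
          (hΓ.mono_set (Ioi_subset_Ioi hs)) measurableSet_Ioi fun x hx ↦
          mul_le_mul_of_nonneg_left (rpow_le_rpow hs (le_of_lt hx) hs) (exp_pos _).le
    _ ≤ ∫ x in Ioi 0, exp (-x) * x ^ s :=
        setIntegral_mono_set hΓ
          (ae_restrict_of_forall_mem measurableSet_Ioi fun x hx ↦
            mul_nonneg (exp_pos _).le (rpow_nonneg (le_of_lt hx) _))
          (Ioi_subset_Ioi hs).eventuallyLE
    _ = Gamma (s + 1) := by rw [Gamma_eq_integral (by linarith), add_sub_cancel_right]

end Real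

open Real

variable {ι : Type*} [Fintype ι]

theorem ofReal_two_mul_pow_le_volume_sum_rpow_le_one {p r : ℝ} (hp : 0 ≤ p) (hr : 0 ≤ r)
    (h : card ι * r ^ p ≤ 1) :
    ENNReal.ofReal ((2 * r) ^ card ι) ≤ volume {x : ι → ℝ | ∑ i, |x i| ^ p ≤ 1} := by
  have hcube : pi univ (fun _ : ι ↦ Icc (-r) r) ⊆ {x | ∑ i, |x i| ^ p ≤ 1} := fun x hx ↦
    calc ∑ i, |x i| ^ p ≤ ∑ _i : ι, r ^ p := Finset.sum_le_sum fun i _ ↦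
          rpow_le_rpow (abs_nonneg _) (abs_le.2 (hx i (mem_univ i))) hp
      _ = card ι * r ^ p := by simp
      _ ≤ 1 := h
  calc ENNReal.ofReal ((2 * r) ^ card ι) = volume (pi univ fun _ : ι ↦ Icc (-r) r) := by
        rw [volume_pi_pi, Real.volume_Icc, Finset.prod_const, Finset.card_univ,
          ← ENNReal.ofReal_pow (by linarith), sub_neg_eq_add, two_mul]
    _ ≤ _ := measure_mono hcube

theorem ofReal_two_pow_mul_card_rpow_le_volume_sum_rpow_le_one {p : ℝ} (hp : 0 < p) :
    ENNReal.ofReal (2 ^ card ι * (card ι : ℝ) ^ (-(card ι : ℝ) / p))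
      ≤ volume {x : ι → ℝ | ∑ i, |x i| ^ p ≤ 1} := by
  have hd : (0 : ℝ) ≤ card ι := Nat.cast_nonneg _
  set r := (card ι : ℝ) ^ (-1 / p)
  have hr : r ^ p = (card ι : ℝ)⁻¹ := by
    rw [← rpow_mul hd, div_mul_cancel₀ _ hp.ne', rpow_neg_one]
  have hrd : (2 * r) ^ card ι = 2 ^ card ι * (card ι : ℝ) ^ (-(card ι : ℝ) / p) := by
    rw [mul_pow, ← rpow_natCast r, ← rpow_mul hd, div_mul_eq_mul_div, neg_one_mul]
  rw [← hrd]
  exact ofReal_two_mul_pow_le_volume_sum_rpow_le_one hp.le (rpow_nonneg hd _)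
    (hr ▸ mul_inv_le_one)

theorem volume_sum_rpow_le_one_le [Nonempty ι] {p : ℝ} (hp : 1 ≤ p) :
    volume {x : ι → ℝ | ∑ i, |x i| ^ p ≤ 1}
      ≤ ENNReal.ofReal (2 ^ card ι * (exp 1 * p / card ι) ^ ((card ι : ℝ) / p)) := by
  have hp0 : 0 < p := by linarith
  have hd : (0 : ℝ) < card ι := Nat.cast_pos.2 card_pos
  have hball : {x : ι → ℝ | ∑ i, |x i| ^ p ≤ 1}
      = {x : ι → ℝ | (∑ i, |x i| ^ p) ^ (1 / p) ≤ 1} := by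
    ext x
    rw [mem_ofPred_eq, mem_ofPred_eq, one_div,
      rpow_inv_le_iff_of_pos (Finset.sum_nonneg fun i _ ↦ rpow_nonneg (abs_nonneg _) _)
        zero_le_one hp0, one_rpow]
  rw [hball, volume_sum_rpow_le (ι := ι) hp, ENNReal.ofReal_one, one_pow, one_mul]
  refine ENNReal.ofReal_le_ofReal ?_
  set s := (card ι : ℝ) / p
  have hs : 0 < s := div_pos hd hp0
  have hΓ₁ : Gamma (1 / p + 1) ≤ 1 := by
    refine Gamma_le_one_of_mem_Icc ⟨by linarith [one_div_pos.2 hp0], ?_⟩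
    linarith [(div_le_one hp0).2 hp]
  have hΓ₁_pos : 0 < Gamma (1 / p + 1) := Gamma_pos_of_pos (by positivity)
  calc (2 * Gamma (1 / p + 1)) ^ card ι / Gamma (s + 1)
      ≤ 2 ^ card ι / (s / exp 1) ^ s :=
        div_le_div₀ (by positivity) (pow_le_pow_left₀ (by positivity) (by linarith) _)
          (by positivity) (div_exp_one_rpow_le_Gamma_add_one hs.le)
    _ = 2 ^ card ι * (exp 1 * p / card ι) ^ s := by
        rw [div_eq_mul_inv, ← inv_rpow (by positivity), inv_div, div_div_eq_mul_div]

/-- Volume bounds for the unit ball of `ℓ_{2m}^d`. -/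
theorem stmt5 {d m : ℕ} (hd : 1 ≤ d) (hm : 1 ≤ m) :
    ENNReal.ofReal (2 ^ d * (Real.exp 1 * ((d : ℝ) + 2 * m)) ^ (-(d : ℝ) / (2 * m)))
      ≤ volume {x : Fin d → ℝ | ∑ j, |x j| ^ (2 * m) ≤ 1}
    ∧ volume {x : Fin d → ℝ | ∑ j, |x j| ^ (2 * m) ≤ 1}
      ≤ ENNReal.ofReal (2 ^ d * (2 * Real.exp 1 * m / d) ^ ((d : ℝ) / (2 * m))) := by
  have : Nonempty (Fin d) := ⟨⟨0, hd⟩⟩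
  have hd0 : (0 : ℝ) < d := by exact_mod_cast hd
  have hp : (1 : ℝ) ≤ 2 * m := by norm_cast; omega
  have hball : {x : Fin d → ℝ | ∑ j, |x j| ^ (2 * m) ≤ 1}
      = {x : Fin d → ℝ | ∑ j, |x j| ^ (2 * (m : ℝ)) ≤ 1} := by
    simp only [← rpow_natCast, Nat.cast_mul, Nat.cast_ofNat]
  have lower := ofReal_two_pow_mul_card_rpow_le_volume_sum_rpow_le_one (ι := Fin d)
    (by linarith : (0 : ℝ) < 2 * m)
  have upper := volume_sum_rpow_le_one_le (ι := Fin d) hp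
  rw [card_fin] at lower upper
  rw [hball]
  refine ⟨le_trans (ENNReal.ofReal_le_ofReal ?_) lower, upper.trans_eq ?_⟩
  · refine mul_le_mul_of_nonneg_left (rpow_le_rpow_of_nonpos hd0 ?_ ?_) (by positivity)
    · nlinarith [add_one_le_exp (1 : ℝ)]
    · exact div_nonpos_of_nonpos_of_nonneg (by linarith) (by linarith)
  · ring_nf
end

section
/- For every fixed natural number $m \ge 1$, $\lim_{d \to \infty} \sqrt{d} \cdot (\mathrm{vol}\,B_{2m}^d)^{m/d} = 2^m \sqrt{2em}\, \Gamma(1 + \tfrac{1}{2m})^m$, where $B_{2m}^d = \{x \in \mathbb{R}^d : \sum_{j=1}^d |x_j|^{2m} \le 1\}$. -/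
/-!
With `x = d / 2m`, the volume formula for `ℓ_p` balls turns `√d · (vol B_{2m}^d)^{m/d}` into
`(2 Γ(1 + 1/2m))^m · √(2m) · √(x / Γ(x+1)^{1/x})`, and Stirling's formula gives
`Γ(x+1)^{1/x} ~ x / e`. For real `x` this follows from the factorial case since `Γ` is increasing
on `[2, ∞)`, so that `⌊x⌋! ≤ Γ(x+1) ≤ (⌊x⌋+1)!`.
-/

open MeasureTheory Filter Real Topology
open scoped Nat

lemma Real.tendsto_log_factorial_div_sub_log :
    Tendsto (fun n : ℕ => log n ! / n - log n) atTop (𝓝 (-1)) := by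
  have hn : Tendsto (fun n : ℕ => (n : ℝ)) atTop atTop := tendsto_natCast_atTop_atTop
  have hstirling : Tendsto (fun n : ℕ => log (Stirling.stirlingSeq n) / n) atTop (𝓝 0) :=
    ((continuousAt_log (by positivity)).tendsto.comp
      Stirling.tendsto_stirlingSeq_sqrt_pi).div_atTop hn
  have hlog : Tendsto (fun n : ℕ => log (2 * n) / (2 * n)) atTop (𝓝 0) :=
    isLittleO_log_id_atTop.tendsto_div_nhds_zero.comp (hn.const_mul_atTop two_pos)
  have key : ∀ᶠ n : ℕ in atTop, log (Stirling.stirlingSeq n) / n + log (2 * n) / (2 * n) - 1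
      = log n ! / n - log n := by
    filter_upwards [eventually_ne_atTop 0] with n hn0
    have hn0' : (0 : ℝ) < n := by positivity
    have hfact : (n ! : ℝ) = Stirling.stirlingSeq n * (√(2 * n) * (n / exp 1) ^ n) := by
      rw [Stirling.stirlingSeq]; field_simp
    have hs : 0 < Stirling.stirlingSeq n :=
      (sqrt_pos.2 pi_pos).trans_le (Stirling.sqrt_pi_le_stirlingSeq hn0)
    rw [hfact, log_mul hs.ne' (by positivity), log_mul (x := √_) (by positivity) (by positivity),
      log_sqrt (by positivity), log_pow, log_div hn0'.ne' (exp_pos 1).ne', log_exp]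
    field_simp
    ring
  simpa using ((hstirling.add hlog).sub_const 1).congr' key

lemma Real.tendsto_log_add_one_div : Tendsto (fun x : ℝ => log (x + 1) / x) atTop (𝓝 0) := by
  have h := (isLittleO_log_id_atTop.tendsto_div_nhds_zero.comp
    (tendsto_atTop_add_const_right _ 1 tendsto_id)).mul (tendsto_inv_atTop_zero.const_add 1)
  simp only [add_zero, mul_one] at h
  refine h.congr' ?_
  filter_upwards [eventually_gt_atTop 0] with x hx
  simp only [Function.comp, id]
  field_simp

lemma Real.factorial_floor_le_Gamma_add_one {x : ℝ} (hx : 1 ≤ x) :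
    (⌊x⌋₊ ! : ℝ) ≤ Gamma (x + 1) := by
  rw [← Gamma_nat_eq_factorial]
  have : (1 : ℝ) ≤ ⌊x⌋₊ := by exact_mod_cast Nat.one_le_floor_iff _ |>.mpr hx
  exact Gamma_strictMonoOn_Ici.monotoneOn (by simp; linarith) (by simp; linarith)
    (by linarith [Nat.floor_le (zero_le_one.trans hx)])

lemma Real.Gamma_add_one_le_factorial_floor_add_one {x : ℝ} (hx : 1 ≤ x) :
    Gamma (x + 1) ≤ ((⌊x⌋₊ + 1) ! : ℝ) := by
  rw [← Gamma_nat_eq_factorial]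
  exact Gamma_strictMonoOn_Ici.monotoneOn (by simp; linarith) (by simp; linarith)
    (by push_cast; linarith [Nat.lt_floor_add_one x])

lemma Real.log_factorial_succ (n : ℕ) : log (n + 1)! = log (n + 1) + log n ! := by
  rw [Nat.factorial_succ, Nat.cast_mul, log_mul (by positivity) (by positivity), Nat.cast_succ]

lemma Real.tendsto_log_Gamma_add_one_div_sub_log :
    Tendsto (fun x : ℝ => log (Gamma (x + 1)) / x - log x) atTop (𝓝 (-1)) := by
  have hfloor : Tendsto (fun x : ℝ => ⌊x⌋₊) atTop atTop := tendsto_nat_floor_atTop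
  have hlower : Tendsto (fun n : ℕ => log n ! / (n + 1) - log (n + 1)) atTop (𝓝 (-1)) := by
    have h := (tendsto_log_factorial_div_sub_log.sub
      (isLittleO_log_id_atTop.tendsto_div_nhds_zero.comp tendsto_natCast_atTop_atTop)).comp
      (tendsto_add_atTop_nat 1)
    rw [sub_zero] at h
    refine h.congr fun n => ?_
    simp only [Function.comp, id, Nat.cast_succ, log_factorial_succ]
    ring
  have hupper : Tendsto (fun n : ℕ => log (n + 1)! / n - log n) atTop (𝓝 (-1)) := by
    have h := tendsto_log_factorial_div_sub_log.add
      (tendsto_log_add_one_div.comp tendsto_natCast_atTop_atTop)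
    rw [add_zero] at h
    refine h.congr fun n => ?_
    simp only [Function.comp, log_factorial_succ]
    ring
  refine tendsto_of_tendsto_of_tendsto_of_le_of_le' (hlower.comp hfloor) (hupper.comp hfloor) ?_ ?_
  · filter_upwards [eventually_ge_atTop 1] with x hx
    have hx0 : 0 < x := by linarith
    have hxn : x ≤ ⌊x⌋₊ + 1 := (Nat.lt_floor_add_one x).le
    have hlog := log_nonneg (Nat.one_le_cast.2 (Nat.factorial_pos ⌊x⌋₊))
    calc log ⌊x⌋₊ ! / (⌊x⌋₊ + 1) - log (⌊x⌋₊ + 1)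
        ≤ log ⌊x⌋₊ ! / x - log x := by gcongr
      _ ≤ log (Gamma (x + 1)) / x - log x := by
        gcongr
        exact factorial_floor_le_Gamma_add_one hx
  · filter_upwards [eventually_ge_atTop 1] with x hx
    have hx0 : 0 < x := by linarith
    have hn : (1 : ℝ) ≤ ⌊x⌋₊ := by exact_mod_cast Nat.one_le_floor_iff _ |>.mpr hx
    have hnx : (⌊x⌋₊ : ℝ) ≤ x := Nat.floor_le hx0.le
    have hlog := log_nonneg (Nat.one_le_cast.2 (Nat.factorial_pos (⌊x⌋₊ + 1)))
    calc log (Gamma (x + 1)) / x - log x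
        ≤ log (⌊x⌋₊ + 1)! / x - log x := by
          have := Gamma_pos_of_pos (by linarith : 0 < x + 1)
          gcongr
          exact Gamma_add_one_le_factorial_floor_add_one hx
      _ ≤ log (⌊x⌋₊ + 1)! / ⌊x⌋₊ - log ⌊x⌋₊ := by gcongr

lemma Real.tendsto_self_div_Gamma_add_one_rpow :
    Tendsto (fun x : ℝ => x / Gamma (x + 1) ^ (1 / x)) atTop (𝓝 (exp 1)) := by
  have h := (continuous_exp.tendsto _).comp tendsto_log_Gamma_add_one_div_sub_log.neg
  rw [neg_neg] at h
  refine h.congr' ?_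
  filter_upwards [eventually_gt_atTop 0] with x hx
  rw [Function.comp_apply, rpow_def_of_pos (Gamma_pos_of_pos (by linarith)), neg_sub,
    exp_sub, exp_log hx, mul_one_div]

lemma MeasureTheory.volume_sum_abs_pow_le_one (ι : Type*) [Fintype ι] [Nonempty ι] {k : ℕ}
    (hk : 1 ≤ k) :
    volume {x : ι → ℝ | ∑ i, |x i| ^ k ≤ 1} =
      .ofReal ((2 * Gamma (1 / k + 1)) ^ Fintype.card ι / Gamma (Fintype.card ι / k + 1)) := by
  have hk' : (0 : ℝ) < k := by positivity
  convert volume_sum_rpow_le ι (p := k) (by exact_mod_cast hk) 1 using 2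
  · ext x
    simp only [Set.mem_ofPred_eq, one_div, rpow_natCast]
    rw [rpow_inv_le_iff_of_pos (by positivity) zero_le_one hk', one_rpow]
  · simp

lemma sqrt_mul_volume_sum_abs_pow_le_one_rpow {m d : ℕ} (hm : 1 ≤ m) (hd : 1 ≤ d) :
    √d * (volume {x : Fin d → ℝ | ∑ j, |x j| ^ (2 * m) ≤ 1}).toReal ^ ((m : ℝ) / d) =
      (2 * Gamma (1 / (2 * m) + 1)) ^ m * √(2 * m) *
        √(d / (2 * m) / Gamma (d / (2 * m) + 1) ^ (1 / (d / (2 * m) : ℝ))) := by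
  have hm0 : (0 : ℝ) < m := by exact_mod_cast hm
  have hd0 : (0 : ℝ) < d := by exact_mod_cast hd
  have : Nonempty (Fin d) := ⟨⟨0, hd⟩⟩
  set a := 2 * Gamma (1 / (2 * m) + 1)
  have ha : 0 < a := mul_pos two_pos (Gamma_pos_of_pos (by positivity))
  set x := (d : ℝ) / (2 * m) with hx
  have hG : 0 < Gamma (x + 1) := Gamma_pos_of_pos (by positivity)
  rw [volume_sum_abs_pow_le_one (Fin d) (by omega : 1 ≤ 2 * m),
    ENNReal.toReal_ofReal (by positivity), Fintype.card_fin]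
  push_cast
  rw [div_rpow (by positivity) hG.le, ← rpow_natCast a d, ← rpow_mul ha.le,
    show (d : ℝ) * (m / d) = m by field_simp, rpow_natCast, sqrt_div' _ (by positivity),
    sqrt_eq_rpow (Gamma (x + 1) ^ (1 / x)), ← rpow_mul hG.le,
    show 1 / x * (1 / 2) = m / d by rw [hx]; field_simp,
    show √(d : ℝ) = √(2 * m) * √x by rw [← sqrt_mul (by positivity), hx]; field_simp]
  ring

/-- Limit of `√d · (vol B_{2m}^d)^{m/d}` as `d → ∞`. -/
theorem stmt6 (m : ℕ) (hm : 1 ≤ m) :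
    Filter.Tendsto
      (fun d : ℕ => Real.sqrt d *
        ((volume {x : Fin d → ℝ | ∑ j, |x j| ^ (2 * m) ≤ 1}).toReal ^ ((m : ℝ) / d)))
      Filter.atTop
      (nhds (2 ^ m * Real.sqrt (2 * Real.exp 1 * m)
        * Real.Gamma (1 + 1 / (2 * m)) ^ m)) := by
  have hx : Tendsto (fun d : ℕ => (d : ℝ) / (2 * m)) atTop atTop :=
    tendsto_natCast_atTop_atTop.atTop_div_const (by positivity)
  have h := ((tendsto_self_div_Gamma_add_one_rpow.comp hx).sqrt).const_mul
    ((2 * Gamma (1 / (2 * m) + 1)) ^ m * √(2 * m))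
  convert h.congr' ?_ using 2
  · rw [show 2 * exp 1 * m = 2 * m * exp 1 by ring, sqrt_mul (by positivity), mul_pow, add_comm]
    ring
  filter_upwards [eventually_ge_atTop 1] with d hd
  exact (sqrt_mul_volume_sum_abs_pow_le_one_rpow hm hd).symm
end

section
/- Let $m, d \ge 1$ and let $(\mu_n)_{n \ge 1}$ be a non-decreasing sequence of non-negative reals satisfying $(\tfrac{\pi}{L}(n - m))^{2m} \le \mu_n \le (\tfrac{\pi}{L}(n-1))^{2m}$ for all $n > m$ and $\mu_n = 0$ for $n \le m$, where $L > 0$. Define $C(l, d) := \#\{\bar n \in \mathbb{N}^d : \sum_{i=1}^d \mu_{n_i} \le \mu_l\}$ for $l \in \mathbb{N}$. Then $C(l, d) \le 2^{-d}(l - 1 + d^{1/(2m)}(m+1))^d \,\mathrm{vol}\,B_{2m}^d$ for all $l$, and $C(l, d) \ge 2^{-d}(l - m - d^{1/(2m)})^d \,\mathrm{vol}\,B_{2m}^d$ for all $l > d^{1/(2m)} + m$. -/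
/-!
Write `g x = ⌊|x|⌋₊ + 1` for `x : ℝ`. The fibre of `g` over `n ≥ 1` is the shell `n - 1 ≤ |x| < n`,
of length `2`, so for a finite set `S` of positive lattice points the preimage of `S` under
`x ↦ (g (x i))ᵢ` has volume `2ᵈ · #S`. Since `|x| < g x ≤ |x| + 1`, this preimage contains the
`ℓ_p`-ball of radius `r - d^{1/p}` (Minkowski) and lies in the ball of radius `r` when `S` is the
set of positive lattice points of `ℓ_p`-norm at most `r`.

The eigenvalue bounds sandwich the counting set between two such lattice balls for `p = 2m`.
Every point of norm at most `l - m` is counted, because `μ n ≤ (π n / L)^{2m}` while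
`μ l ≥ (π (l - m) / L)^{2m}`. Every counted `n` satisfies `n ≤ (n - m)⁺ + m` coordinatewise with
`‖(n - m)⁺‖_{2m} ≤ l - 1`, hence has norm at most `l - 1 + d^{1/(2m)} m` by Minkowski.
-/

open MeasureTheory
open scoped Pointwise

lemma sum_add_pow_le_pow {ι : Type*} [Fintype ι] {p : ℕ} (hp : p ≠ 0) {u : ι → ℝ}
    (hu : ∀ i, 0 ≤ u i) {s c : ℝ} (hs : 0 ≤ s) (hc : 0 ≤ c) (h : ∑ i, u i ^ p ≤ s ^ p) :
    ∑ i, (u i + c) ^ p ≤ (s + (Fintype.card ι : ℝ) ^ ((1 : ℝ) / p) * c) ^ p := by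
  have hp0 : (0 : ℝ) < p := by positivity
  have hsum_nonneg : ∀ v : ι → ℝ, (∀ i, 0 ≤ v i) → 0 ≤ ∑ i, v i ^ p :=
    fun v hv => Finset.sum_nonneg fun i _ => pow_nonneg (hv i) p
  have hmink := Real.Lp_add_le_of_nonneg Finset.univ (f := u) (g := fun _ => c)
    (p := p) (by exact_mod_cast Nat.one_le_iff_ne_zero.mpr hp) (fun i _ => hu i) (fun _ _ => hc)
  simp only [Real.rpow_natCast, Finset.sum_const, Finset.card_univ, nsmul_eq_mul] at hmink
  have hu_norm : (∑ i, u i ^ p) ^ ((1 : ℝ) / p) ≤ s := by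
    rw [one_div, Real.rpow_inv_le_iff_of_pos (hsum_nonneg u hu) hs hp0, Real.rpow_natCast]
    exact h
  have hc_norm : ((Fintype.card ι : ℝ) * c ^ p) ^ ((1 : ℝ) / p)
      = (Fintype.card ι : ℝ) ^ ((1 : ℝ) / p) * c := by
    rw [Real.mul_rpow (by positivity) (by positivity), one_div,
      Real.pow_rpow_inv_natCast hc hp]
  rw [← Real.rpow_natCast (s + _), ← Real.rpow_inv_le_iff_of_pos
    (hsum_nonneg _ fun i => add_nonneg (hu i) hc) (by positivity) hp0, ← one_div]
  linarith

noncomputable def shellIndex (x : ℝ) : ℕ := ⌊|x|⌋₊ + 1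

lemma abs_lt_shellIndex (x : ℝ) : |x| < shellIndex x := by
  simpa [shellIndex] using Nat.lt_floor_add_one |x|

lemma shellIndex_le_abs_add_one (x : ℝ) : (shellIndex x : ℝ) ≤ |x| + 1 := by
  simpa [shellIndex] using Nat.floor_le (abs_nonneg x)

lemma measurable_shellIndex : Measurable shellIndex :=
  measurable_abs.nat_floor.add_const 1

lemma shellIndex_preimage_singleton {n : ℕ} (hn : 1 ≤ n) :
    shellIndex ⁻¹' {n} = Metric.ball 0 n \ Metric.ball 0 ((n : ℝ) - 1) := by
  ext x
  have hfloor : ⌊|x|⌋₊ + 1 = n ↔ ⌊|x|⌋₊ = n - 1 := by omega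
  simp only [Set.mem_preimage, Set.mem_singleton_iff, shellIndex, Set.mem_sdiff,
    Metric.mem_ball, dist_zero_right, Real.norm_eq_abs, not_lt, hfloor,
    Nat.floor_eq_iff (abs_nonneg x), Nat.cast_sub hn, Nat.cast_one, sub_add_cancel]
  exact and_comm

lemma volume_shellIndex_preimage_singleton {n : ℕ} (hn : 1 ≤ n) :
    volume (shellIndex ⁻¹' {n}) = 2 := by
  have hn' : (1 : ℝ) ≤ n := by exact_mod_cast hn
  rw [shellIndex_preimage_singleton hn, measure_sdiff (Metric.ball_subset_ball (by linarith))
    measurableSet_ball.nullMeasurableSet measure_ball_lt_top.ne, Real.volume_ball,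
    Real.volume_ball, ← ENNReal.ofReal_sub _ (by linarith)]
  ring_nf
  exact ENNReal.ofReal_ofNat 2

lemma volume_preimage_shellIndex_pi {d : ℕ} (s : Finset (Fin d → ℕ))
    (hs : ∀ k ∈ s, ∀ i, 1 ≤ k i) :
    volume ((fun (x : Fin d → ℝ) i => shellIndex (x i)) ⁻¹' (s : Set (Fin d → ℕ)))
      = 2 ^ d * s.card := by
  have hfiber (k : Fin d → ℕ) : (fun x : Fin d → ℝ => fun i => shellIndex (x i)) ⁻¹' {k}
      = Set.univ.pi fun i => shellIndex ⁻¹' {k i} := by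
    ext x
    simp [funext_iff]
  rw [← sum_measure_preimage_singleton s fun k _ => by
    rw [hfiber k]; exact .univ_pi fun i => measurable_shellIndex (measurableSet_singleton _)]
  rw [Finset.sum_congr rfl fun k hk => by
    rw [hfiber k, volume_pi_pi, Finset.prod_congr rfl fun i _ =>
      volume_shellIndex_preimage_singleton (hs k hk i)]]
  simp only [Finset.prod_const, Finset.card_univ, Fintype.card_fin, Finset.sum_const,
    nsmul_eq_mul]
  ring

def lpUnitBall (p d : ℕ) : Set (Fin d → ℝ) := {x | ∑ j, |x j| ^ p ≤ 1}

def posLatticePoints (p d : ℕ) (r : ℝ) : Set (Fin d → ℕ) :=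
  {k | (∀ i, 1 ≤ k i) ∧ ∑ i, (k i : ℝ) ^ p ≤ r ^ p}

section LatticeCount

variable {p d : ℕ}

lemma posLatticePoints_finite (hp : p ≠ 0) (r : ℝ) : (posLatticePoints p d r).Finite := by
  refine (Set.Finite.pi fun (_ : Fin d) => Set.finite_Iic ⌊|r|⌋₊).subset fun k hk i _ => ?_
  have hki : (k i : ℝ) ^ p ≤ |r| ^ p :=
    calc (k i : ℝ) ^ p ≤ ∑ j, (k j : ℝ) ^ p :=
          Finset.single_le_sum (f := fun j => (k j : ℝ) ^ p) (fun j _ => by positivity)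
            (Finset.mem_univ i)
      _ ≤ r ^ p := hk.2
      _ ≤ |r| ^ p := (le_abs_self _).trans_eq (abs_pow r p)
  exact Nat.le_floor ((pow_le_pow_iff_left₀ (Nat.cast_nonneg _) (abs_nonneg r) hp).mp hki)

lemma posLatticePoints_mono {r r' : ℝ} (hr : 0 ≤ r) (hrr' : r ≤ r') :
    posLatticePoints p d r ⊆ posLatticePoints p d r' :=
  fun _ hk => ⟨hk.1, hk.2.trans (pow_le_pow_left₀ hr hrr' p)⟩

lemma setOf_sum_abs_pow_le_eq_smul (hp : p ≠ 0) {r : ℝ} (hr : 0 ≤ r) :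
    {x : Fin d → ℝ | ∑ j, |x j| ^ p ≤ r ^ p} = r • lpUnitBall p d := by
  rcases hr.eq_or_lt with rfl | hr
  · rw [Set.zero_smul_set ⟨0, by simp [lpUnitBall, hp]⟩]
    ext x
    have hterm_nonneg : ∀ j ∈ Finset.univ, 0 ≤ |x j| ^ p := fun j _ => by positivity
    rw [Set.mem_ofPred_eq, zero_pow hp, (Finset.sum_nonneg hterm_nonneg).ge_iff_eq',
      Finset.sum_eq_zero_iff_of_nonneg hterm_nonneg]
    simp [hp, funext_iff]
  · ext x
    rw [Set.mem_smul_set_iff_inv_smul_mem₀ hr.ne']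
    simp only [lpUnitBall, Set.mem_ofPred_eq, Pi.smul_apply, smul_eq_mul, abs_mul, mul_pow,
      abs_inv, abs_of_pos hr, ← Finset.mul_sum, inv_pow]
    rw [inv_mul_le_iff₀ (by positivity), mul_one]

lemma volume_setOf_sum_abs_pow_le (hp : p ≠ 0) {r : ℝ} (hr : 0 ≤ r) :
    volume {x : Fin d → ℝ | ∑ j, |x j| ^ p ≤ r ^ p}
      = ENNReal.ofReal (r ^ d) * volume (lpUnitBall p d) := by
  rw [setOf_sum_abs_pow_le_eq_smul hp hr, Measure.addHaar_smul_of_nonneg volume hr,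
    Module.finrank_fintype_fun_eq_card, Fintype.card_fin]

lemma volume_lpUnitBall_ne_top (hp : p ≠ 0) : volume (lpUnitBall p d) ≠ ⊤ := by
  refine ne_top_of_le_ne_top (measure_closedBall_lt_top (x := (0 : Fin d → ℝ)) (r := 1)).ne
    (measure_mono fun x hx => ?_)
  rw [Metric.mem_closedBall, dist_zero_right, pi_norm_le_iff_of_nonneg zero_le_one]
  intro i
  have hxi : |x i| ^ p ≤ 1 :=
    (Finset.single_le_sum (f := fun j => |x j| ^ p) (fun j _ => by positivity)
      (Finset.mem_univ i)).trans hx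
  simpa using (pow_le_one_iff_of_nonneg (abs_nonneg _) hp).mp hxi

lemma two_pow_mul_card_posLatticePoints_le (hp : p ≠ 0) {r : ℝ} (hr : 0 ≤ r) :
    2 ^ d * (Nat.card (posLatticePoints p d r) : ℝ)
      ≤ r ^ d * (volume (lpUnitBall p d)).toReal := by
  have hfin := posLatticePoints_finite (d := d) hp r
  have hsub : (fun (x : Fin d → ℝ) i => shellIndex (x i)) ⁻¹' hfin.toFinset
      ⊆ {x | ∑ j, |x j| ^ p ≤ r ^ p} := fun x hx => by
    rw [Set.mem_preimage, Set.Finite.coe_toFinset] at hx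
    refine le_trans (Finset.sum_le_sum fun j _ => ?_) hx.2
    exact pow_le_pow_left₀ (abs_nonneg _) (abs_lt_shellIndex _).le p
  have hvol := (measure_mono (μ := volume) hsub).trans_eq (volume_setOf_sum_abs_pow_le hp hr)
  rw [volume_preimage_shellIndex_pi _ fun k hk => (hfin.mem_toFinset.mp hk).1] at hvol
  have := ENNReal.toReal_mono
    (ENNReal.mul_ne_top ENNReal.ofReal_ne_top (volume_lpUnitBall_ne_top hp)) hvol
  rw [ENNReal.toReal_mul, ENNReal.toReal_mul, ENNReal.toReal_ofReal (pow_nonneg hr d)] at this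
  simpa [Nat.card_eq_card_finite_toFinset hfin] using this

lemma le_two_pow_mul_card_posLatticePoints (hp : p ≠ 0) {r : ℝ}
    (hr : (d : ℝ) ^ ((1 : ℝ) / p) ≤ r) :
    (r - (d : ℝ) ^ ((1 : ℝ) / p)) ^ d * (volume (lpUnitBall p d)).toReal
      ≤ 2 ^ d * (Nat.card (posLatticePoints p d r) : ℝ) := by
  have hfin := posLatticePoints_finite (d := d) hp r
  have hsub : {x : Fin d → ℝ | ∑ j, |x j| ^ p ≤ (r - (d : ℝ) ^ ((1 : ℝ) / p)) ^ p}
      ⊆ (fun (x : Fin d → ℝ) i => shellIndex (x i)) ⁻¹' hfin.toFinset := fun x hx => by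
    rw [Set.mem_preimage, Set.Finite.coe_toFinset]
    refine ⟨fun i => Nat.le_add_left 1 _, ?_⟩
    have hball := sum_add_pow_le_pow hp (fun j => abs_nonneg (x j)) (sub_nonneg.mpr hr)
      zero_le_one hx
    rw [Fintype.card_fin, mul_one, sub_add_cancel] at hball
    refine le_trans (Finset.sum_le_sum fun j _ => ?_) hball
    exact pow_le_pow_left₀ (Nat.cast_nonneg _) (shellIndex_le_abs_add_one _) p
  have hvol := (volume_setOf_sum_abs_pow_le hp (sub_nonneg.mpr hr)).symm.trans_le
    (measure_mono (μ := volume) hsub)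
  rw [volume_preimage_shellIndex_pi _ fun k hk => (hfin.mem_toFinset.mp hk).1] at hvol
  have := ENNReal.toReal_mono
    (ENNReal.mul_ne_top (ENNReal.pow_ne_top ENNReal.ofNat_ne_top) (ENNReal.natCast_ne_top _)) hvol
  rw [ENNReal.toReal_mul, ENNReal.toReal_ofReal (pow_nonneg (sub_nonneg.mpr hr) d)] at this
  simpa [Nat.card_eq_card_finite_toFinset hfin] using this

end LatticeCount

section Envelope

variable {m : ℕ} {μ : ℕ → ℝ} {a : ℝ}

lemma pow_mul_max_sub_le (hzero : ∀ n, 1 ≤ n → n ≤ m → μ n = 0)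
    (hlow : ∀ n : ℕ, m < n → (a * ((n : ℝ) - m)) ^ (2 * m) ≤ μ n) {n : ℕ} (hn : 1 ≤ n) :
    (a * max ((n : ℝ) - m) 0) ^ (2 * m) ≤ μ n := by
  rcases le_or_gt n m with h | h
  · have hnm : (n : ℝ) ≤ m := by exact_mod_cast h
    rw [max_eq_right (by linarith), mul_zero, zero_pow (by omega), hzero n hn h]
  · have hnm : (m : ℝ) ≤ n := by exact_mod_cast h.le
    rw [max_eq_left (by linarith)]
    exact hlow n h

lemma le_pow_mul_sub_one (hzero : ∀ n, 1 ≤ n → n ≤ m → μ n = 0)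
    (hup : ∀ n : ℕ, m < n → μ n ≤ (a * ((n : ℝ) - 1)) ^ (2 * m)) {n : ℕ} (hn : 1 ≤ n) :
    μ n ≤ (a * ((n : ℝ) - 1)) ^ (2 * m) := by
  rcases le_or_gt n m with h | h
  · rw [hzero n hn h]
    exact (even_two_mul m).pow_nonneg _
  · exact hup n h

lemma mem_posLatticePoints_of_sum_le {d : ℕ} (hm : 1 ≤ m) (ha : a ≠ 0)
    (hzero : ∀ n, 1 ≤ n → n ≤ m → μ n = 0)
    (hlow : ∀ n : ℕ, m < n → (a * ((n : ℝ) - m)) ^ (2 * m) ≤ μ n)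
    (hup : ∀ n : ℕ, m < n → μ n ≤ (a * ((n : ℝ) - 1)) ^ (2 * m))
    {l : ℕ} (hl : 1 ≤ l) {n : Fin d → ℕ} (hn : ∀ i, 1 ≤ n i) (hsum : ∑ i, μ (n i) ≤ μ l) :
    n ∈ posLatticePoints (2 * m) d ((l : ℝ) - 1 + (d : ℝ) ^ ((1 : ℝ) / (2 * m : ℕ)) * m) := by
  set v : Fin d → ℝ := fun i => max ((n i : ℝ) - m) 0
  have hv : ∑ i, v i ^ (2 * m) ≤ ((l : ℝ) - 1) ^ (2 * m) := by
    refine le_of_mul_le_mul_left ?_ ((even_two_mul m).pow_pos ha)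
    calc a ^ (2 * m) * ∑ i, v i ^ (2 * m) = ∑ i, (a * v i) ^ (2 * m) := by
          simp only [mul_pow, Finset.mul_sum]
      _ ≤ ∑ i, μ (n i) := Finset.sum_le_sum fun i _ => pow_mul_max_sub_le hzero hlow (hn i)
      _ ≤ μ l := hsum
      _ ≤ (a * ((l : ℝ) - 1)) ^ (2 * m) := le_pow_mul_sub_one hzero hup hl
      _ = a ^ (2 * m) * ((l : ℝ) - 1) ^ (2 * m) := mul_pow _ _ _
  have hl' : (1 : ℝ) ≤ l := by exact_mod_cast hl
  have hball := sum_add_pow_le_pow (by omega) (fun i => le_max_right _ _)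
    (sub_nonneg.mpr hl') (Nat.cast_nonneg m) hv
  rw [Fintype.card_fin] at hball
  refine ⟨hn, le_trans (Finset.sum_le_sum fun i _ => ?_) hball⟩
  exact pow_le_pow_left₀ (Nat.cast_nonneg _) (by linarith [le_max_left ((n i : ℝ) - m) 0]) _

lemma sum_le_of_mem_posLatticePoints {d : ℕ} (ha : 0 ≤ a)
    (hzero : ∀ n, 1 ≤ n → n ≤ m → μ n = 0)
    (hlow : ∀ n : ℕ, m < n → (a * ((n : ℝ) - m)) ^ (2 * m) ≤ μ n)
    (hup : ∀ n : ℕ, m < n → μ n ≤ (a * ((n : ℝ) - 1)) ^ (2 * m))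
    {l : ℕ} (hl : m < l) {k : Fin d → ℕ} (hk : k ∈ posLatticePoints (2 * m) d ((l : ℝ) - m)) :
    ∑ i, μ (k i) ≤ μ l := by
  have hterm (i : Fin d) : μ (k i) ≤ a ^ (2 * m) * (k i : ℝ) ^ (2 * m) := by
    have hki : (1 : ℝ) ≤ k i := by exact_mod_cast hk.1 i
    rw [← mul_pow]
    refine (le_pow_mul_sub_one hzero hup (hk.1 i)).trans (pow_le_pow_left₀ ?_ ?_ _)
    · exact mul_nonneg ha (by linarith)
    · exact mul_le_mul_of_nonneg_left (by linarith) ha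
  calc ∑ i, μ (k i) ≤ ∑ i, a ^ (2 * m) * (k i : ℝ) ^ (2 * m) :=
        Finset.sum_le_sum fun i _ => hterm i
    _ = a ^ (2 * m) * ∑ i, (k i : ℝ) ^ (2 * m) := Finset.mul_sum _ _ _ |>.symm
    _ ≤ a ^ (2 * m) * ((l : ℝ) - m) ^ (2 * m) := by gcongr; exact hk.2
    _ = (a * ((l : ℝ) - m)) ^ (2 * m) := (mul_pow _ _ _).symm
    _ ≤ μ l := hlow l hl

end Envelope

theorem stmt13_general {m d : ℕ} (hm : 1 ≤ m) (L : ℝ) (hL : 0 < L)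
    (μ : ℕ → ℝ)
    (hzero : ∀ n, 1 ≤ n → n ≤ m → μ n = 0)
    (hlow : ∀ n : ℕ, m < n → (Real.pi / L * ((n : ℝ) - m)) ^ (2 * m) ≤ μ n)
    (hup : ∀ n : ℕ, m < n → μ n ≤ (Real.pi / L * ((n : ℝ) - 1)) ^ (2 * m)) :
    (∀ l : ℕ, 1 ≤ l →
      (Nat.card {n : Fin d → ℕ | (∀ i, 1 ≤ n i) ∧ ∑ i, μ (n i) ≤ μ l} : ℝ)
        ≤ (2 ^ d)⁻¹ * ((l : ℝ) - 1 + (d : ℝ) ^ ((1 : ℝ) / (2 * m)) * ((m : ℝ) + 1)) ^ d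
          * (volume {x : Fin d → ℝ | ∑ j, |x j| ^ (2 * m) ≤ 1}).toReal) ∧
    (∀ l : ℕ, (d : ℝ) ^ ((1 : ℝ) / (2 * m)) + m < l →
      (2 ^ d)⁻¹ * ((l : ℝ) - m - (d : ℝ) ^ ((1 : ℝ) / (2 * m))) ^ d
          * (volume {x : Fin d → ℝ | ∑ j, |x j| ^ (2 * m) ≤ 1}).toReal
        ≤ (Nat.card {n : Fin d → ℕ | (∀ i, 1 ≤ n i) ∧ ∑ i, μ (n i) ≤ μ l} : ℝ)) := by
  have hp : 2 * m ≠ 0 := by omega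
  have ha : 0 < Real.pi / L := div_pos Real.pi_pos hL
  have hexp : ((2 * m : ℕ) : ℝ) = 2 * m := by push_cast; rfl
  have hroot : 0 ≤ (d : ℝ) ^ ((1 : ℝ) / (2 * m)) := by positivity
  have hsubset (l : ℕ) (hl : 1 ≤ l) :
      {n : Fin d → ℕ | (∀ i, 1 ≤ n i) ∧ ∑ i, μ (n i) ≤ μ l}
        ⊆ posLatticePoints (2 * m) d ((l : ℝ) - 1 + (d : ℝ) ^ ((1 : ℝ) / (2 * m)) * (m + 1)) := by
    have hl' : (1 : ℝ) ≤ l := by exact_mod_cast hl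
    exact fun n hn => posLatticePoints_mono (by positivity) (by nlinarith)
      (hexp ▸ mem_posLatticePoints_of_sum_le hm ha.ne' hzero hlow hup hl hn.1 hn.2)
  refine ⟨fun l hl => ?_, fun l hl => ?_⟩
  · rw [mul_assoc, le_inv_mul_iff₀ (by positivity)]
    have hl' : (1 : ℝ) ≤ l := by exact_mod_cast hl
    refine le_trans ?_ (two_pow_mul_card_posLatticePoints_le hp (by positivity))
    gcongr
    exact Nat.card_mono (posLatticePoints_finite hp _) (hsubset l hl)
  · have hml : m < l := by exact_mod_cast (by linarith : (m : ℝ) < l)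
    have hlattice := le_two_pow_mul_card_posLatticePoints (d := d) hp (r := (l : ℝ) - m)
      (by rw [hexp]; linarith)
    rw [hexp] at hlattice
    rw [mul_assoc, inv_mul_le_iff₀ (by positivity)]
    refine hlattice.trans ?_
    gcongr
    exact Nat.card_mono ((posLatticePoints_finite hp _).subset (hsubset l (by omega)))
      fun k hk => ⟨hk.1, sum_le_of_mem_posLatticePoints ha.le hzero hlow hup hml hk⟩

/-- Counting bounds for `C(l,d)` in the proof of Theorem 5.3. -/
theorem stmt13 {m d : ℕ} (hm : 1 ≤ m) (hd : 1 ≤ d) (L : ℝ) (hL : 0 < L)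
    (μ : ℕ → ℝ) (hmono : Monotone μ) (hnonneg : ∀ n, 0 ≤ μ n)
    (hzero : ∀ n, 1 ≤ n → n ≤ m → μ n = 0)
    (hlow : ∀ n : ℕ, m < n → (Real.pi / L * ((n : ℝ) - m)) ^ (2 * m) ≤ μ n)
    (hup : ∀ n : ℕ, m < n → μ n ≤ (Real.pi / L * ((n : ℝ) - 1)) ^ (2 * m)) :
    (∀ l : ℕ, 1 ≤ l →
      (Nat.card {n : Fin d → ℕ | (∀ i, 1 ≤ n i) ∧ ∑ i, μ (n i) ≤ μ l} : ℝ)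
        ≤ (2 ^ d)⁻¹ * ((l : ℝ) - 1 + (d : ℝ) ^ ((1 : ℝ) / (2 * m)) * ((m : ℝ) + 1)) ^ d
          * (volume {x : Fin d → ℝ | ∑ j, |x j| ^ (2 * m) ≤ 1}).toReal) ∧
    (∀ l : ℕ, (d : ℝ) ^ ((1 : ℝ) / (2 * m)) + m < l →
      (2 ^ d)⁻¹ * ((l : ℝ) - m - (d : ℝ) ^ ((1 : ℝ) / (2 * m))) ^ d
          * (volume {x : Fin d → ℝ | ∑ j, |x j| ^ (2 * m) ≤ 1}).toReal
        ≤ (Nat.card {n : Fin d → ℕ | (∀ i, 1 ≤ n i) ∧ ∑ i, μ (n i) ≤ μ l} : ℝ)) :=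
  stmt13_general hm L hL μ hzero hlow hup
end
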